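/- For all a, b modulo e, the identity Σ_{i=0}^{e−1} Σ_{j=0}^{e−1} ζ^{−(a i + b j)} J(i,j)_e = e² · (a,b)_e holds, where (a,b)_e is the cyclotomic number of order e. -/

import Mathlib

/-!
For `z ^ e = 1`, the sum `∑_{i<e} ζ^{-ci} z^i` equals `e` if `z = ζ^c` and `0` otherwise.
Since `γ` generates `Fˣ`, `χ ^ e = 1`, so every `χ v` with `v ≠ 0` is an `e`-th root of unity,
while `(χ ^ i) 0 = 0` for all `i` (also for `i = 0`, as in the paper's convention). Expanding the
Jacobi sums and exchanging the order of summation turns the left-hand side into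
`∑ v` of a product of two such sums, i.e. `e²` times the indicator of
`χ v = ζ ^ a ∧ χ (v + 1) = ζ ^ b`.
-/

open Finset

theorem sum_range_zpow_neg_mul_pow_eq_ite {K : Type*} [Field K] [DecidableEq K] {e : ℕ}
    {ζ z : K} (hζ : ζ ^ e = 1) (hz : z ^ e = 1) (c : ℕ) :
    ∑ i ∈ range e, ζ ^ (-((c : ℤ) * i)) * z ^ i = if z = ζ ^ c then (e : K) else 0 := by
  rcases Nat.eq_zero_or_pos e with rfl | he
  · simp
  have hζ0 : ζ ≠ 0 := by rintro rfl; simp [he.ne'] at hζ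
  have hterm : ∀ i : ℕ, ζ ^ (-((c : ℤ) * i)) * z ^ i = (z / ζ ^ c) ^ i := fun i => by
    rw [neg_mul_eq_neg_mul, zpow_mul, zpow_neg, zpow_natCast, zpow_natCast, div_pow,
      inv_pow, ← pow_mul, inv_mul_eq_div]
  simp only [hterm]
  split_ifs with h
  · simp [h, hζ0]
  · have hw : z / ζ ^ c ≠ 1 := fun hw => h ((div_eq_one_iff_eq (pow_ne_zero c hζ0)).1 hw)
    rw [geom_sum_eq hw, div_pow, hz, ← pow_mul, mul_comm, pow_mul, hζ, one_pow, div_one,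
      sub_self, zero_div]

namespace MulChar

variable {R : Type*} [CommMonoid R] {K : Type*} [Field K] [DecidableEq K]

theorem pow_eq_one_of_forall_mem_zpowers {R' : Type*} [CommMonoidWithZero R']
    (χ : MulChar R R') {γ : Rˣ}
    (hγ : ∀ u : Rˣ, u ∈ Subgroup.zpowers γ) {e : ℕ} (he : χ γ ^ e = 1) : χ ^ e = 1 := by
  have hunit : χ.toUnitHom γ ^ e = 1 := Units.ext (by simpa [coe_toUnitHom] using he)
  refine ext fun u => ?_
  obtain ⟨k, rfl⟩ := Subgroup.mem_zpowers_iff.1 (hγ u)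
  rw [pow_apply_coe, one_apply_coe, ← coe_toUnitHom, map_zpow, ← Units.val_pow_eq_pow_val,
    ← zpow_natCast, ← zpow_mul, mul_comm, zpow_mul, zpow_natCast, hunit, one_zpow, Units.val_one]

theorem sum_range_zpow_neg_mul_pow_apply_eq_ite (χ : MulChar R K) {e : ℕ}
    (hχ : χ ^ e = 1) {ζ : K} (hζ : ζ ^ e = 1) (c : ℕ) (v : R) :
    ∑ i ∈ range e, ζ ^ (-((c : ℤ) * i)) * (χ ^ i) v = if χ v = ζ ^ c then (e : K) else 0 := by
  by_cases hv : IsUnit v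
  · obtain ⟨u, rfl⟩ := hv
    have hχu : χ u ^ e = 1 := by rw [← pow_apply_coe, hχ, one_apply_coe]
    simpa only [pow_apply_coe] using sum_range_zpow_neg_mul_pow_eq_ite hζ hχu c
  · rcases Nat.eq_zero_or_pos e with rfl | he
    · simp
    have hζc : ζ ^ c ≠ 0 := pow_ne_zero c (by rintro rfl; simp [he.ne'] at hζ)
    simp [map_nonunit _ hv, hζc.symm]

end MulChar

theorem sum_range_sum_range_zpow_neg_mul_sum_mul {K ι : Type*} [Field K] [Fintype ι] {ζ : K}
    (hζ : ζ ≠ 0) (a b m n : ℕ) (f g : ℕ → ι → K) :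
    ∑ i ∈ range m, ∑ j ∈ range n, ζ ^ (-((a : ℤ) * i + (b : ℤ) * j)) * ∑ v, f i v * g j v
      = ∑ v, (∑ i ∈ range m, ζ ^ (-((a : ℤ) * i)) * f i v)
          * ∑ j ∈ range n, ζ ^ (-((b : ℤ) * j)) * g j v := by
  simp only [sum_mul_sum]
  simp only [mul_sum, neg_add, zpow_add₀ hζ]
  rw [sum_congr rfl fun i _ => sum_comm, sum_comm]
  exact sum_congr rfl fun i _ => sum_congr rfl fun v _ => sum_congr rfl fun j _ => by ring

theorem sum_ite_mul_ite_eq_mul_ncard {ι M : Type*} [Fintype ι] [CommSemiring M] (p q : ι → Prop)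
    [DecidablePred p] [DecidablePred q] (c d : M) :
    ∑ v, (if p v then c else 0) * (if q v then d else 0) = c * d * {v | p v ∧ q v}.ncard := by
  simp only [ite_zero_mul_ite_zero, ← sum_filter, sum_const, nsmul_eq_mul, mul_comm (c * d),
    Set.ncard_eq_toFinset_card', Set.toFinset_ofPred]

theorem sum_zeta_mul_jacobi_eq_cyclotomic_general
    (F : Type) [Field F] [Fintype F] (e : ℕ)
    (γ : Fˣ) (hγ : ∀ u : Fˣ, u ∈ Subgroup.zpowers γ)
    (ζ : ℂ) (hζ : IsPrimitiveRoot ζ e)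
    (χ : MulChar F ℂ) (hχγ : χ (γ : F) = ζ)
    (a b : ℕ) :
    ∑ i ∈ Finset.range e, ∑ j ∈ Finset.range e,
        ζ ^ (-((a : ℤ) * i + (b : ℤ) * j)) * ∑ v : F, (χ ^ i) v * (χ ^ j) (1 + v)
      = (e : ℂ) ^ 2
        * (Set.ncard {v : F | χ v = ζ ^ a ∧ χ (v + 1) = ζ ^ b} : ℂ) := by
  have hζ0 : ζ ≠ 0 := hχγ ▸ χ.apply_ne_zero_iff.2 γ.isUnit
  have hχe : χ ^ e = 1 := χ.pow_eq_one_of_forall_mem_zpowers hγ (hχγ ▸ hζ.pow_eq_one)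
  rw [sum_range_sum_range_zpow_neg_mul_sum_mul hζ0]
  simp only [χ.sum_range_zpow_neg_mul_pow_apply_eq_ite hχe hζ.pow_eq_one, add_comm (1 : F)]
  rw [sum_ite_mul_ite_eq_mul_ncard, sq]

/-- Relation between Jacobi sums and cyclotomic numbers:
`∑_{i,j=0}^{e-1} ζ^{-(ai+bj)} J(i,j)_e = e² (a,b)_e`, where
`J(i,j)_e = ∑ v, χ^i(v) χ^j(1+v)` and `(a,b)_e = #{v : χ(v) = ζ^a, χ(v+1) = ζ^b}`,
with `γ` a generator of `Fˣ`, `ζ` a primitive complex `e`-th root of unity and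
`χ(γ) = ζ`. -/
theorem sum_zeta_mul_jacobi_eq_cyclotomic
    (F : Type) [Field F] [Fintype F] (e : ℕ) (he : 2 ≤ e)
    (hq : Fintype.card F % e = 1)
    (γ : Fˣ) (hγ : ∀ u : Fˣ, u ∈ Subgroup.zpowers γ)
    (ζ : ℂ) (hζ : IsPrimitiveRoot ζ e)
    (χ : MulChar F ℂ) (hχγ : χ (γ : F) = ζ)
    (a b : ℕ) :
    ∑ i ∈ Finset.range e, ∑ j ∈ Finset.range e,
        ζ ^ (-((a : ℤ) * i + (b : ℤ) * j)) * ∑ v : F, (χ ^ i) v * (χ ^ j) (1 + v)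
      = (e : ℂ) ^ 2
        * (Set.ncard {v : F | χ v = ζ ^ a ∧ χ (v + 1) = ζ ^ b} : ℂ) :=
  sum_zeta_mul_jacobi_eq_cyclotomic_general F e γ hγ ζ hζ χ hχγ a b
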